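/- arXiv:math/0206194 — 6 statements merged into one kernel-verified Lean document; each statement's English description precedes it below -/
import Mathlib

section
/- For any finite binary words A and B, and any bi-infinite binary configuration x, the lower density of occurrences of A in x is at least the lower density of occurrences of B in x times the density of occurrences of A in B: ρ₋(x,A) ≥ ρ₋(x,B)·ρ(B,A). The same holds for upper densities. -/
open Filter
open scoped Classical

/-- Density ρ(B,A) of occurrences of the word A in the finite word B:
the number of positions at which A occurs as a factor of B, divided by |B|. -/
noncomputable def wordDensity (B A : List ℕ) : ℝ :=
  (((Finset.range B.length).filter
      (fun i => ∀ j : Fin A.length, B[i + (j : ℕ)]? = some (A.get j))).card : ℝ) / B.length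

/-- Number of occurrences of the word A starting in the window x[-n,m],
divided by the window length n+m+1. -/
noncomputable def occAvg (x : ℤ → ℕ) (A : List ℕ) (p : ℕ × ℕ) : ℝ :=
  (((Finset.Icc (-(p.1 : ℤ)) (p.2 : ℤ)).filter
      (fun i => ∀ j : Fin A.length, x (i + j) = A.get j)).card : ℝ) / (p.1 + p.2 + 1)

/-- Lower density ρ₋(x,A). -/
noncomputable def rhoMinusW (x : ℤ → ℕ) (A : List ℕ) : ℝ :=
  Filter.liminf (occAvg x A) (Filter.atTop ×ˢ Filter.atTop)

/-- Upper density ρ₊(x,A). -/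
noncomputable def rhoPlusW (x : ℤ → ℕ) (A : List ℕ) : ℝ :=
  Filter.limsup (occAvg x A) (Filter.atTop ×ˢ Filter.atTop)

/-!
Double counting: if `B` occurs at `i` and `A` occurs in `B` at offset `k < |B|`, then `A` occurs
at `i + k`, and a given occurrence of `A` arises from at most `|B|` such pairs. So on the window
`[-n, m]`, the frequency of `B` times `ρ(B,A)` is at most the frequency of `A` on the window
`[-n, m + |B|]` plus an error `|B| / (n + m + 1)`. The error vanishes in the limit, and
stretching the window by `|B|` on the right does not change the filter `atTop ×ˢ atTop`, so
the inequality passes to `liminf` and `limsup`.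
-/

open Topology

section
variable {ι : Type*} {l : Filter ι} {u v e : ι → ℝ} {c : ℝ}

lemma liminf_mul_le_liminf_of_le_add [l.NeBot] (hc : 0 ≤ c)
    (hu : IsBoundedUnder (· ≤ ·) l u) (hu' : IsBoundedUnder (· ≥ ·) l u)
    (hv : IsBoundedUnder (· ≤ ·) l v) (hv' : IsBoundedUnder (· ≥ ·) l v)
    (he : Tendsto e l (𝓝 0)) (h : ∀ᶠ i in l, u i * c ≤ e i + v i) :
    liminf u l * c ≤ liminf v l :=
  calc liminf u l * c = liminf ((· * c) ∘ u) l :=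
        (monotone_mul_right_of_nonneg hc).map_liminf_of_continuousAt u
          (continuous_mul_const c).continuousAt hu.isCoboundedUnder_flip hu'
    _ ≤ liminf (e + v) l :=
        liminf_le_liminf h ((monotone_mul_right_of_nonneg hc).isBoundedUnder_ge_comp hu')
          (isBoundedUnder_le_add he.isBoundedUnder_le hv).isCoboundedUnder_flip
    _ ≤ limsup e l + liminf v l :=
        liminf_add_le he.isBoundedUnder_ge he.isBoundedUnder_le hv' hv.isCoboundedUnder_flip
    _ = liminf v l := by rw [he.limsup_eq, zero_add]

lemma limsup_mul_le_limsup_of_le_add [l.NeBot] (hc : 0 ≤ c)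
    (hu : IsBoundedUnder (· ≤ ·) l u) (hu' : IsBoundedUnder (· ≥ ·) l u)
    (hv : IsBoundedUnder (· ≤ ·) l v) (hv' : IsBoundedUnder (· ≥ ·) l v)
    (he : Tendsto e l (𝓝 0)) (h : ∀ᶠ i in l, u i * c ≤ e i + v i) :
    limsup u l * c ≤ limsup v l :=
  calc limsup u l * c = limsup ((· * c) ∘ u) l :=
        (monotone_mul_right_of_nonneg hc).map_limsup_of_continuousAt u
          (continuous_mul_const c).continuousAt hu hu'.isCoboundedUnder_flip
    _ ≤ limsup (e + v) l :=
        limsup_le_limsup h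
          ((monotone_mul_right_of_nonneg hc).isBoundedUnder_ge_comp hu').isCoboundedUnder_flip
          (isBoundedUnder_le_add he.isBoundedUnder_le hv)
    _ ≤ limsup e l + limsup v l :=
        limsup_add_le he.isBoundedUnder_ge he.isBoundedUnder_le hv'.isCoboundedUnder_flip hv
    _ = limsup v l := by rw [he.limsup_eq, zero_add]
end

open Finset

-- Reducible, so that `occurrences` uses the same decidability instance as `occAvg`.
abbrev OccursAt (x : ℤ → ℕ) (A : List ℕ) (i : ℤ) : Prop :=
  ∀ j : Fin A.length, x (i + j) = A.get j

noncomputable def occurrences (x : ℤ → ℕ) (A : List ℕ) (s : Finset ℤ) : Finset ℤ :=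
  s.filter (OccursAt x A)

noncomputable def wordOccurrences (B A : List ℕ) : Finset ℕ :=
  (range B.length).filter (fun i => ∀ j : Fin A.length, B[i + (j : ℕ)]? = some (A.get j))

lemma occAvg_eq (x : ℤ → ℕ) (A : List ℕ) (n m : ℕ) :
    occAvg x A (n, m) = #(occurrences x A (Icc (-n : ℤ) m)) / (n + m + 1) := rfl

lemma wordDensity_eq (B A : List ℕ) :
    wordDensity B A = #(wordOccurrences B A) / B.length := rfl

lemma OccursAt.add {x : ℤ → ℕ} {A B : List ℕ} {i : ℤ} {k : ℕ} (hi : OccursAt x B i)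
    (hk : k ∈ wordOccurrences B A) : OccursAt x A (i + k) := by
  intro j
  obtain ⟨hlt, hget⟩ := List.getElem?_eq_some_iff.mp ((mem_filter.mp hk).2 j)
  rw [← hget, add_assoc, ← Nat.cast_add]
  exact hi ⟨k + j, hlt⟩

lemma card_occurrences_mul_card_wordOccurrences_le (x : ℤ → ℕ) (A B : List ℕ) (a b : ℤ) :
    #(occurrences x B (Icc a b)) * #(wordOccurrences B A) ≤
      #(occurrences x A (Icc a (b + B.length))) * B.length := by
  rw [← card_product, mul_comm _ B.length]
  refine card_le_mul_card_image_of_maps_to (f := fun q : ℤ × ℕ => q.1 + q.2) ?_ _ ?_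
  · rintro ⟨i, k⟩ hik
    obtain ⟨hi, hk⟩ := mem_product.mp hik
    obtain ⟨hi_mem, hi_occ⟩ := mem_filter.mp hi
    have hkL : k < B.length := mem_range.mp (mem_filter.mp hk).1
    refine mem_filter.mpr ⟨?_, hi_occ.add hk⟩
    rw [mem_Icc] at hi_mem ⊢
    omega
  · intro c _
    calc #{q ∈ occurrences x B (Icc a b) ×ˢ wordOccurrences B A | q.1 + q.2 = c}
        ≤ #(range B.length) := by
          refine card_le_card_of_injOn Prod.snd ?_ ?_
          · intro q hq
            exact (mem_filter.mp (mem_product.mp (mem_filter.mp hq).1).2).1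
          · intro q hq q' hq' h
            have hc := (mem_filter.mp hq).2
            have hc' := (mem_filter.mp hq').2
            exact Prod.ext (by omega) h
      _ = B.length := card_range _

lemma card_Icc_neg_natCast (n m : ℕ) : #(Icc (-(n : ℤ)) m) = n + m + 1 := by
  rw [Int.card_Icc]
  omega

lemma wordDensity_nonneg (B A : List ℕ) : 0 ≤ wordDensity B A := by
  unfold wordDensity
  positivity

lemma occAvg_nonneg (x : ℤ → ℕ) (A : List ℕ) (p : ℕ × ℕ) : 0 ≤ occAvg x A p := by
  unfold occAvg
  positivity

lemma occAvg_le_one (x : ℤ → ℕ) (A : List ℕ) (p : ℕ × ℕ) : occAvg x A p ≤ 1 := by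
  rw [occAvg_eq, div_le_one (by positivity)]
  exact_mod_cast (card_filter_le _ _).trans (card_Icc_neg_natCast p.1 p.2).le

lemma occAvg_mul_wordDensity_le (x : ℤ → ℕ) (A B : List ℕ) (n m : ℕ) :
    occAvg x B (n, m) * wordDensity B A ≤
      B.length / (n + m + 1) + occAvg x A (n, m + B.length) := by
  have hN : (0 : ℝ) < n + m + 1 := by positivity
  have hcount : (#(occurrences x B (Icc (-n : ℤ) m)) * #(wordOccurrences B A) : ℝ) ≤
      #(occurrences x A (Icc (-n : ℤ) ↑(m + B.length))) * B.length := by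
    rw [Nat.cast_add]
    exact_mod_cast card_occurrences_mul_card_wordOccurrences_le x A B (-n) m
  have hA_eq : (#(occurrences x A (Icc (-n : ℤ) ↑(m + B.length))) : ℝ) / (n + m + 1) =
      occAvg x A (n, m + B.length) +
        occAvg x A (n, m + B.length) * (B.length / (n + m + 1)) := by
    rw [occAvg_eq]
    field_simp
    push_cast
    ring
  rcases (B.length).eq_zero_or_pos with hL | hL
  · rw [wordDensity_eq, hL]
    simpa using occAvg_nonneg x A _
  calc occAvg x B (n, m) * wordDensity B A
      ≤ (#(occurrences x A (Icc (-n : ℤ) ↑(m + B.length))) : ℝ) / (n + m + 1) := by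
        rw [occAvg_eq, wordDensity_eq, div_mul_div_comm, div_le_div_iff₀ (by positivity) hN]
        nlinarith
    _ ≤ B.length / (n + m + 1) + occAvg x A (n, m + B.length) := by
        rw [hA_eq, add_comm]
        gcongr
        exact mul_le_of_le_one_left (by positivity) (occAvg_le_one x A _)

lemma tendsto_div_add_add_one_atTop_prod_atTop (c : ℝ) :
    Tendsto (fun p : ℕ × ℕ => c / (p.1 + p.2 + 1)) (atTop ×ˢ atTop) (𝓝 0) := by
  refine tendsto_const_nhds.div_atTop (tendsto_atTop_mono (fun p => ?_)
    (tendsto_natCast_atTop_atTop.comp tendsto_fst))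
  simp only [Function.comp_apply]
  linarith [(p.2.cast_nonneg : (0 : ℝ) ≤ p.2)]

lemma map_prodMap_id_add_atTop_prod_atTop (k : ℕ) :
    map (Prod.map id (· + k)) (atTop ×ˢ atTop) = (atTop ×ˢ atTop : Filter (ℕ × ℕ)) := by
  rw [← prod_map_map_eq', map_id, map_add_atTop_eq_nat]

theorem rho_enclosure_general (x : ℤ → ℕ)
    (A B : List ℕ) :
    rhoMinusW x A ≥ rhoMinusW x B * wordDensity B A ∧
    rhoPlusW x A ≥ rhoPlusW x B * wordDensity B A := by
  set shift : ℕ × ℕ → ℕ × ℕ := Prod.map id (· + B.length)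
  have hshift : map shift (atTop ×ˢ atTop) = atTop ×ˢ atTop :=
    map_prodMap_id_add_atTop_prod_atTop B.length
  have hle : ∀ᶠ p in atTop ×ˢ atTop, occAvg x B p * wordDensity B A ≤
      B.length / (p.1 + p.2 + 1) + (occAvg x A ∘ shift) p :=
    Eventually.of_forall fun p => occAvg_mul_wordDensity_le x A B p.1 p.2
  have hbdd_le : ∀ C (f : ℕ × ℕ → ℕ × ℕ),
      IsBoundedUnder (· ≤ ·) (atTop ×ˢ atTop) (occAvg x C ∘ f) :=
    fun C f => isBoundedUnder_of ⟨1, fun p => occAvg_le_one x C (f p)⟩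
  have hbdd_ge : ∀ C (f : ℕ × ℕ → ℕ × ℕ),
      IsBoundedUnder (· ≥ ·) (atTop ×ˢ atTop) (occAvg x C ∘ f) :=
    fun C f => isBoundedUnder_of ⟨0, fun p => occAvg_nonneg x C (f p)⟩
  have he := tendsto_div_add_add_one_atTop_prod_atTop B.length
  have hd := wordDensity_nonneg B A
  constructor
  · have := liminf_mul_le_liminf_of_le_add hd (hbdd_le B id) (hbdd_ge B id)
      (hbdd_le A shift) (hbdd_ge A shift) he hle
    rwa [liminf_comp _ shift, hshift] at this
  · have := limsup_mul_le_limsup_of_le_add hd (hbdd_le B id) (hbdd_ge B id)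
      (hbdd_le A shift) (hbdd_ge A shift) he hle
    rwa [limsup_comp _ shift, hshift] at this

/-- ρ±(x,A) ≥ ρ±(x,B)·ρ(B,A) for any finite binary words A, B and any binary
configuration x. -/
theorem rho_enclosure (x : ℤ → ℕ) (hx : ∀ i, x i ≤ 1)
    (A B : List ℕ) (hA : ∀ a ∈ A, a ≤ 1) (hB : ∀ b ∈ B, b ≤ 1) :
    rhoMinusW x A ≥ rhoMinusW x B * wordDensity B A ∧
    rhoPlusW x A ≥ rhoPlusW x B * wordDensity B A :=
  rho_enclosure_general x A B
end

section
/- The traffic map T preserves the density of ones: for every x ∈ {0,1}^ℤ, ρ₋(Tx,1) = ρ₋(x,1) and ρ₊(Tx,1) = ρ₊(x,1). -/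
/-!
Write `flux x i = min (x (i-1)) (1 - x i) ∈ {0, 1}` for the indicator that a car jumps from
`i - 1` to `i`. Then `(T x) i = x i + flux x i - flux x (i + 1)`, so over a window the sums of
`T x` and of `x` differ only by the two boundary fluxes. Hence the window averages of `T x` and
`x` differ by at most `1 / (n + m + 1)`, which tends to `0`, and bounded functions whose
difference tends to `0` have the same liminf and limsup.
-/

open Filter

/-- The traffic map T: (Tx)ᵢ = xᵢ + min(xᵢ₋₁, 1-xᵢ) - min(xᵢ, 1-xᵢ₊₁)
(simultaneous substitution 10 → 01). -/
def T (x : ℤ → ℕ) : ℤ → ℕ :=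
  fun i => x i + min (x (i - 1)) (1 - x i) - min (x i) (1 - x (i + 1))

/-- Average of ones in the window x[-n, m]. -/
noncomputable def winAvg (x : ℤ → ℕ) (p : ℕ × ℕ) : ℝ :=
  (∑ i ∈ Finset.Icc (-(p.1 : ℤ)) (p.2 : ℤ), (x i : ℝ)) / (p.1 + p.2 + 1)

/-- Lower density ρ₋(x,1). -/
noncomputable def rhoMinus (x : ℤ → ℕ) : ℝ :=
  Filter.liminf (winAvg x) (Filter.atTop ×ˢ Filter.atTop)

/-- Upper density ρ₊(x,1). -/
noncomputable def rhoPlus (x : ℤ → ℕ) : ℝ :=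
  Filter.limsup (winAvg x) (Filter.atTop ×ˢ Filter.atTop)

open Topology Finset

namespace Filter

variable {ι : Type*} {l : Filter ι} [l.NeBot] {f g : ι → ℝ}

theorem limsup_eq_of_tendsto_sub (hg₁ : IsBoundedUnder (· ≤ ·) l g)
    (hg₂ : IsBoundedUnder (· ≥ ·) l g) (h : Tendsto (f - g) l (𝓝 0)) :
    limsup f l = limsup g l := by
  have hf : f = g + (f - g) := (add_sub_cancel g f).symm
  rw [hf]
  refine le_antisymm ?_ ?_
  · simpa [h.limsup_eq] using
      limsup_add_le hg₂ hg₁ h.isBoundedUnder_ge.isCoboundedUnder_le h.isBoundedUnder_le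
  · simpa [h.liminf_eq] using
      le_limsup_add hg₁ hg₂.isCoboundedUnder_le h.isBoundedUnder_le h.isBoundedUnder_ge

theorem liminf_eq_of_tendsto_sub (hg₁ : IsBoundedUnder (· ≤ ·) l g)
    (hg₂ : IsBoundedUnder (· ≥ ·) l g) (h : Tendsto (f - g) l (𝓝 0)) :
    liminf f l = liminf g l := by
  have hf : f = g + (f - g) := (add_sub_cancel g f).symm
  refine le_antisymm ?_ ?_
  · rw [hf, add_comm]
    simpa [h.limsup_eq] using
      liminf_add_le h.isBoundedUnder_ge h.isBoundedUnder_le hg₂ hg₁.isCoboundedUnder_ge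
  · rw [hf]
    simpa [h.liminf_eq] using
      le_liminf_add hg₂ hg₁ h.isBoundedUnder_ge h.isBoundedUnder_le.isCoboundedUnder_ge

end Filter

theorem Int.sum_Icc_sub {M : Type*} [AddCommGroup M] (f : ℤ → M) {m n : ℤ} (hmn : m ≤ n) :
    ∑ i ∈ Icc m n, (f (i + 1) - f i) = f (n + 1) - f m := by
  induction n, hmn using Int.leInduction with
  | base => simp
  | succ n hmn ih =>
    rw [← insert_Icc_right_eq_Icc_add_one (by omega), sum_insert (by simp), ih]
    abel

def flux (x : ℤ → ℕ) (i : ℤ) : ℕ := min (x (i - 1)) (1 - x i)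

theorem flux_le_one (x : ℤ → ℕ) (i : ℤ) : flux x i ≤ 1 :=
  (min_le_right _ _).trans (Nat.sub_le _ _)

theorem T_eq_add_flux_sub_flux (x : ℤ → ℕ) (i : ℤ) :
    (T x i : ℝ) = x i + flux x i - flux x (i + 1) := by
  have hflux : flux x (i + 1) = min (x i) (1 - x (i + 1)) := by simp [flux]
  have hle : flux x (i + 1) ≤ x i + flux x i := hflux ▸ (min_le_left _ _).trans le_self_add
  rw [show T x i = x i + flux x i - flux x (i + 1) by simp [T, flux],
    Nat.cast_sub hle, Nat.cast_add]

theorem winAvg_T_sub_winAvg (x : ℤ → ℕ) (p : ℕ × ℕ) :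
    winAvg (T x) p - winAvg x p =
      ((flux x (-p.1) : ℝ) - flux x (p.2 + 1)) / (p.1 + p.2 + 1) := by
  have hsum : ∑ i ∈ Icc (-(p.1 : ℤ)) p.2, (T x i : ℝ) =
      ∑ i ∈ Icc (-(p.1 : ℤ)) p.2, (x i : ℝ) - ((flux x (p.2 + 1) : ℝ) - flux x (-p.1)) := by
    rw [← Int.sum_Icc_sub (fun i => (flux x i : ℝ)) (by omega), ← sum_sub_distrib]
    exact sum_congr rfl fun i _ => by rw [T_eq_add_flux_sub_flux]; ring
  rw [winAvg, winAvg, hsum, ← sub_div]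
  ring

theorem tendsto_inv_window_length :
    Tendsto (fun p : ℕ × ℕ => ((p.1 : ℝ) + p.2 + 1)⁻¹) (atTop ×ˢ atTop) (𝓝 0) := by
  have hlen : Tendsto (fun p : ℕ × ℕ => (p.1 : ℝ) + p.2 + 1) (atTop ×ˢ atTop) atTop :=
    ((tendsto_natCast_atTop_atTop.comp tendsto_fst).atTop_add_atTop
      (tendsto_natCast_atTop_atTop.comp tendsto_snd)).atTop_add tendsto_const_nhds
  exact hlen.inv_tendsto_atTop

theorem tendsto_winAvg_T_sub_winAvg (x : ℤ → ℕ) :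
    Tendsto (winAvg (T x) - winAvg x) (atTop ×ˢ atTop) (𝓝 0) := by
  refine squeeze_zero_norm (fun p => ?_) tendsto_inv_window_length
  have hflux : ∀ i, (flux x i : ℝ) ≤ 1 := fun i => by exact_mod_cast flux_le_one x i
  have hlen : (0 : ℝ) < p.1 + p.2 + 1 := by positivity
  rw [Pi.sub_apply, winAvg_T_sub_winAvg, norm_div, Real.norm_eq_abs, Real.norm_eq_abs,
    abs_of_pos hlen, div_eq_mul_inv]
  exact mul_le_of_le_one_left (inv_nonneg.2 hlen.le)
    (abs_sub_le_of_nonneg_of_le (Nat.cast_nonneg _) (hflux _) (Nat.cast_nonneg _) (hflux _))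

theorem winAvg_nonneg (x : ℤ → ℕ) (p : ℕ × ℕ) : 0 ≤ winAvg x p := by
  unfold winAvg
  positivity

theorem winAvg_le_one {x : ℤ → ℕ} (hx : ∀ i, x i ≤ 1) (p : ℕ × ℕ) : winAvg x p ≤ 1 := by
  rw [winAvg, div_le_one (by positivity)]
  calc ∑ i ∈ Icc (-(p.1 : ℤ)) p.2, (x i : ℝ) ≤ ∑ _i ∈ Icc (-(p.1 : ℤ)) p.2, (1 : ℝ) :=
        sum_le_sum fun i _ => by exact_mod_cast hx i
    _ = p.1 + p.2 + 1 := by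
        rw [sum_const, nsmul_one, ← Int.cast_natCast, Int.card_Icc_of_le _ _ (by omega)]
        push_cast
        ring

/-- The traffic map preserves the lower and upper densities of ones. -/
theorem T_preserves_density (x : ℤ → ℕ) (hx : ∀ i, x i ≤ 1) :
    rhoMinus (T x) = rhoMinus x ∧ rhoPlus (T x) = rhoPlus x := by
  have hle : IsBoundedUnder (· ≤ ·) (atTop ×ˢ atTop) (winAvg x) :=
    isBoundedUnder_of ⟨1, winAvg_le_one hx⟩
  have hge : IsBoundedUnder (· ≥ ·) (atTop ×ˢ atTop) (winAvg x) :=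
    isBoundedUnder_of ⟨0, winAvg_nonneg x⟩
  exact ⟨liminf_eq_of_tendsto_sub hle hge (tendsto_winAvg_T_sub_winAvg x),
    limsup_eq_of_tendsto_sub hle hge (tendsto_winAvg_T_sub_winAvg x)⟩
end

section
/- A configuration x ∈ {0,1}^ℤ is a fixed point of the traffic map T if and only if x contains no factor 10, i.e. there is no index i with x_i = 1 and x_{i+1} = 0. Consequently the set of fixed points consists exactly of the all-zero configuration, the all-one configuration, and the step configurations x^{(n)} with x^{(n)}_i = 0 for i < n and x^{(n)}_i = 1 for i ≥ n. -/
/-- The step configuration x⁽ⁿ⁾: zeros for i < n and ones for i ≥ n. -/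
def step (n : ℤ) : ℤ → ℕ := fun i => if i < n then 0 else 1

lemma nofactor_iff (x : ℤ → ℕ) (hx : ∀ i, x i ≤ 1) :
    (∀ i : ℤ, ¬(x i = 1 ∧ x (i + 1) = 0)) ↔
      (∀ i, x i = 0) ∨ (∀ i, x i = 1) ∨ ∃ n : ℤ, x = step n := by
  constructor
  · intro h
    have step1 : ∀ i, x i = 1 → x (i + 1) = 1 := by
      intro i hi
      have := h i
      have := hx (i + 1)
      omega
    have up : ∀ n, x n = 1 → ∀ i, n ≤ i → x i = 1 := by
      intro n hn i hi
      refine Int.le_induction hn (fun k _ ih => step1 k ih) i hi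
    by_cases h0 : ∀ i, x i = 0
    · exact Or.inl h0
    push_neg at h0
    obtain ⟨m, hm⟩ := h0
    have hm1 : x m = 1 := by have := hx m; omega
    by_cases h1 : ∀ i, x i = 1
    · exact Or.inr (Or.inl h1)
    push_neg at h1
    obtain ⟨k, hk⟩ := h1
    have hk0 : x k = 0 := by have := hx k; omega
    -- the set of ones is bounded below by k+1
    have bdd : ∀ i, x i = 1 → k + 1 ≤ i := by
      intro i hi
      by_contra hcon
      push_neg at hcon
      have : x k = 1 := up i hi k (by omega)
      omega
    obtain ⟨n, hn1, hnleast⟩ := Int.exists_least_of_bdd (P := fun i => x i = 1)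
      ⟨k + 1, fun i hi => bdd i hi⟩ ⟨m, hm1⟩
    refine Or.inr (Or.inr ⟨n, ?_⟩)
    funext i
    simp only [step]
    by_cases hi : i < n
    · have : x i ≠ 1 := fun hc => absurd (hnleast i hc) (by omega)
      have := hx i
      simp only [if_pos hi]
      omega
    · simp only [if_neg hi]
      exact up n hn1 i (by omega)
  · rintro (h | h | ⟨n, rfl⟩) i ⟨ha, hb⟩
    · rw [h i] at ha; omega
    · rw [h (i + 1)] at hb; omega
    · simp only [step] at ha hb
      split at ha <;> split at hb <;> omega

/-- x is a fixed point of T iff it contains no factor 10; equivalently, the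
fixed points are exactly the all-zero, the all-one, and the step configurations. -/
theorem fixed_points_of_T (x : ℤ → ℕ) (hx : ∀ i, x i ≤ 1) :
    (T x = x ↔ ∀ i : ℤ, ¬(x i = 1 ∧ x (i + 1) = 0)) ∧
    (T x = x ↔ (∀ i, x i = 0) ∨ (∀ i, x i = 1) ∨ ∃ n : ℤ, x = step n) := by
  have h1 : T x = x ↔ ∀ i : ℤ, ¬(x i = 1 ∧ x (i + 1) = 0) := by
    constructor
    · intro hT i ⟨ha, hb⟩
      have := congrFun hT i
      simp only [T, ha, hb] at this
      omega
    · intro h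
      funext i
      have hi := hx i
      have him := hx (i - 1)
      have hip := hx (i + 1)
      have hA := h (i - 1)
      have hB := h i
      rw [sub_add_cancel] at hA
      simp only [T]
      omega
  exact ⟨h1, h1.trans (nofactor_iff x hx)⟩
end

section
/- Every fixed point of the traffic map T is unstable: for the step fixed point x^{(n)} (zeros for i < n, ones for i ≥ n) and each m > n, the configuration y^{(n,m)} that agrees with x^{(n)} except y_i = 0 for i > m satisfies dist(x^{(n)}, y^{(n,m)}) = 2^{-m} → 0 as m → ∞, yet dist(T^t x^{(n)}, T^t y^{(n,m)}) → 2^{-(n-1)} ≠ 0 as t → ∞. -/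
open Filter

/-- The metric dist(x,y) = Σᵢ 2^{-|i|} |xᵢ - yᵢ|. -/
noncomputable def cdist (x y : ℤ → ℕ) : ℝ :=
  ∑' i : ℤ, (2 : ℝ) ^ (-|i|) * |(x i : ℝ) - (y i : ℝ)|

/-- The perturbation y⁽ⁿ'ᵐ⁾ agreeing with x⁽ⁿ⁾ except that yᵢ = 0 for i > m. -/
def ystep (n m : ℤ) : ℤ → ℕ := fun i => if i < n ∨ m < i then 0 else 1

lemma hasSum_tail (L : ℤ) :
    HasSum (fun i : ℤ => if L ≤ i then (2:ℝ)^(-i) else 0) ((2:ℝ)^(1-L)) := by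
  have hf : Function.Injective (fun k : ℕ => L + (k:ℤ)) := by
    intro a b h; simpa using h
  have h0 : ∀ x ∉ Set.range (fun k : ℕ => L + (k:ℤ)),
      (if L ≤ x then (2:ℝ)^(-x) else 0) = 0 := by
    intro x hx
    rw [if_neg]
    intro hL
    exact hx ⟨(x-L).toNat, by simp; omega⟩
  rw [← hf.hasSum_iff h0]
  have hg : HasSum (fun k : ℕ => (2:ℝ)^(-L) * (2⁻¹)^k) ((2:ℝ)^(-L) * 2) := by
    have := hasSum_geometric_of_lt_one (by norm_num : (0:ℝ) ≤ 2⁻¹) (by norm_num : (2⁻¹:ℝ) < 1)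
    have h2 : (1 - 2⁻¹ : ℝ)⁻¹ = 2 := by norm_num
    rw [h2] at this
    exact this.mul_left _
  have he : ((fun i : ℤ => if L ≤ i then (2:ℝ)^(-i) else 0) ∘ (fun k : ℕ => L + (k:ℤ)))
      = fun k : ℕ => (2:ℝ)^(-L) * (2⁻¹)^k := by
    funext k
    simp only [Function.comp_apply]
    rw [if_pos (by omega), neg_add, zpow_add₀ (by norm_num : (2:ℝ) ≠ 0)]
    congr 1
    rw [zpow_neg, zpow_natCast, ← inv_pow]
  rw [he]
  have : (2:ℝ)^(1-L) = (2:ℝ)^(-L) * 2 := by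
    rw [sub_eq_add_neg, add_comm, zpow_add₀ (by norm_num : (2:ℝ) ≠ 0), zpow_one]
  rw [this]; exact hg

def zfun (n m t : ℤ) : ℤ → ℕ := fun i =>
  if (n ≤ i ∧ i ≤ m - t) ∨
     (m - t + 2 ≤ i ∧ t + 2*n - m ≤ i ∧ i ≤ m + t ∧ (i + m + t) % 2 = 0) then 1 else 0

lemma T_step (n : ℤ) : T (step n) = step n := by
  funext i; simp only [T, step]; split_ifs <;> omega

lemma T_zfun (n m : ℤ) (hm : n < m) (t : ℤ) (ht : 0 ≤ t) :
    T (zfun n m t) = zfun n m (t+1) := by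
  funext i; simp only [T, zfun]; split_ifs <;> omega

lemma iter_ystep (n m : ℤ) (hm : n < m) (t : ℕ) :
    T^[t] (ystep n m) = zfun n m t := by
  induction t with
  | zero =>
    funext i
    simp only [Function.iterate_zero, id, ystep, zfun]
    split_ifs <;> omega
  | succ t ih =>
    rw [Function.iterate_succ_apply', ih, T_zfun n m hm t (by positivity)]
    norm_cast

lemma zfun_one (n m t i : ℤ) (hm : n < m) (ht : 0 ≤ t) (h : zfun n m t i = 1) :
    n ≤ i ∧ t + 2*n - m ≤ i := by
  simp only [zfun] at h
  split_ifs at h with hc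
  omega

lemma zfun_cases (n m t i : ℤ) : zfun n m t i = 0 ∨ zfun n m t i = 1 := by
  simp only [zfun]; split_ifs <;> simp

lemma key (n m : ℤ) (hn : 1 ≤ n) (hm : n < m) (t : ℤ) (ht : 0 ≤ t) (i : ℤ) :
    (2:ℝ)^(-|i|) * |((step n i : ℕ) : ℝ) - ((zfun n m t i : ℕ) : ℝ)| =
    (if n ≤ i then (2:ℝ)^(-i) else 0) -
      (if zfun n m t i = 1 then (2:ℝ)^(-i) else 0) := by
  rcases lt_or_ge i n with h | h
  · have hz : zfun n m t i = 0 := by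
      rcases zfun_cases n m t i with h0 | h1
      · exact h0
      · exact absurd (zfun_one n m t i hm ht h1).1 (by omega)
    rw [if_neg (by omega), if_neg (by omega), hz]
    simp [step, if_pos h]
  · have habs : |i| = i := abs_of_nonneg (by omega)
    have hs : step n i = 1 := by simp [step]; omega
    rcases zfun_cases n m t i with h0 | h1
    · rw [if_pos h, if_neg (by omega), hs, h0, habs]
      norm_num
    · rw [if_pos h, if_pos h1, hs, h1, habs]
      norm_num

lemma g2_le (n m : ℤ) (hn : 1 ≤ n) (hm : n < m) (t : ℤ) (ht : 0 ≤ t) (i : ℤ) :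
    (if zfun n m t i = 1 then (2:ℝ)^(-i) else 0) ≤ (if n ≤ i then (2:ℝ)^(-i) else 0) := by
  split_ifs with h1 h2
  · exact le_refl _
  · exact absurd (zfun_one n m t i hm ht h1).1 h2
  · positivity
  · exact le_refl _

lemma g2_summable (n m : ℤ) (hn : 1 ≤ n) (hm : n < m) (t : ℤ) (ht : 0 ≤ t) :
    Summable (fun i : ℤ => if zfun n m t i = 1 then (2:ℝ)^(-i) else 0) :=
  (hasSum_tail n).summable.of_nonneg_of_le
    (fun i => by split_ifs <;> positivity) (g2_le n m hn hm t ht)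

lemma cdist_zfun (n m : ℤ) (hn : 1 ≤ n) (hm : n < m) (t : ℤ) (ht : 0 ≤ t) :
    cdist (step n) (zfun n m t) =
      (2:ℝ)^(1-n) - ∑' i : ℤ, (if zfun n m t i = 1 then (2:ℝ)^(-i) else 0) := by
  unfold cdist
  rw [tsum_congr (key n m hn hm t ht),
    Summable.tsum_sub (hasSum_tail n).summable (g2_summable n m hn hm t ht),
    (hasSum_tail n).tsum_eq]

lemma S2_le (n m : ℤ) (hn : 1 ≤ n) (hm : n < m) (t : ℤ) (ht : 0 ≤ t) :
    (∑' i : ℤ, (if zfun n m t i = 1 then (2:ℝ)^(-i) else 0)) ≤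
      (2:ℝ)^(1-(t+2*n-m)) := by
  rw [← (hasSum_tail (t+2*n-m)).tsum_eq]
  refine Summable.tsum_le_tsum (fun i => ?_) (g2_summable n m hn hm t ht) (hasSum_tail _).summable
  split_ifs with h1 h2
  · exact le_refl _
  · exact absurd (zfun_one n m t i hm ht h1).2 h2
  · positivity
  · exact le_refl _

lemma pow_split (n m : ℤ) (t : ℕ) :
    (2:ℝ)^(1-((t:ℤ)+2*n-m)) = (2:ℝ)^(1-2*n+m) * (2⁻¹)^t := by
  rw [show (1-((t:ℤ)+2*n-m)) = (1-2*n+m) + (-(t:ℤ)) by ring,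
    zpow_add₀ (by norm_num : (2:ℝ) ≠ 0)]
  congr 1
  rw [zpow_neg, zpow_natCast, ← inv_pow]

lemma cdist_ystep (n m : ℤ) (hn : 1 ≤ n) (hm : n < m) :
    cdist (step n) (ystep n m) = (2:ℝ)^(-m) := by
  unfold cdist
  have hpt : ∀ i : ℤ, (2:ℝ)^(-|i|) * |((step n i : ℕ) : ℝ) - ((ystep n m i : ℕ) : ℝ)|
      = if m+1 ≤ i then (2:ℝ)^(-i) else 0 := by
    intro i
    simp only [step, ystep]
    rcases le_or_gt (m+1) i with h | h
    · rw [if_neg (show ¬ i < n by omega), if_pos (show i < n ∨ m < i by omega),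
        if_pos h, abs_of_nonneg (show (0:ℤ) ≤ i by omega)]
      norm_num
    · rcases lt_or_ge i n with h2 | h2
      · rw [if_pos h2, if_pos (Or.inl h2), if_neg (show ¬ m+1 ≤ i by omega)]; simp
      · rw [if_neg (show ¬ i < n by omega), if_neg (show ¬ (i < n ∨ m < i) by omega),
          if_neg (show ¬ m+1 ≤ i by omega)]; simp
  rw [tsum_congr hpt, (hasSum_tail (m+1)).tsum_eq]
  congr 1
  ring

/-- Instability of the step fixed points: dist(x⁽ⁿ⁾, y⁽ⁿ'ᵐ⁾) = 2^{-m} (which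
tends to 0 as m → ∞), while dist(Tᵗx⁽ⁿ⁾, Tᵗy⁽ⁿ'ᵐ⁾) → 2^{-(n-1)} ≠ 0 as t → ∞. -/
theorem step_unstable (n m : ℤ) (hn : 1 ≤ n) (hm : n < m) :
    cdist (step n) (ystep n m) = (2 : ℝ) ^ (-m) ∧
    Tendsto (fun t : ℕ => cdist (T^[t] (step n)) (T^[t] (ystep n m))) atTop
      (nhds ((2 : ℝ) ^ (-(n - 1)))) ∧
    (2 : ℝ) ^ (-(n - 1)) ≠ 0 := by
  refine ⟨cdist_ystep n m hn hm, ?_, zpow_ne_zero _ (by norm_num)⟩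
  have hfun : (fun t : ℕ => cdist (T^[t] (step n)) (T^[t] (ystep n m)))
      = fun t : ℕ => (2:ℝ)^(1-n) -
          ∑' i : ℤ, (if zfun n m (t:ℤ) i = 1 then (2:ℝ)^(-i) else 0) := by
    funext t
    rw [Function.iterate_fixed (T_step n) t, iter_ystep n m hm t,
      cdist_zfun n m hn hm t (by positivity)]
  rw [hfun, show -(n-1) = 1-n by ring]
  have h0 : Tendsto (fun t : ℕ =>
      ∑' i : ℤ, (if zfun n m (t:ℤ) i = 1 then (2:ℝ)^(-i) else 0)) atTop (nhds 0) := by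
    refine squeeze_zero (g := fun t : ℕ => (2:ℝ)^(1-((t:ℤ)+2*n-m)))
      (fun t => tsum_nonneg (fun i => by split_ifs <;> positivity))
      (fun t => S2_le n m hn hm t (by positivity)) ?_
    have he : (fun t : ℕ => (2:ℝ)^(1-((t:ℤ)+2*n-m)))
        = fun t : ℕ => (2:ℝ)^(1-2*n+m) * (2⁻¹)^t := funext (pow_split n m)
    rw [he]
    simpa using (tendsto_pow_atTop_nhds_zero_of_lt_one (by norm_num : (0:ℝ) ≤ 2⁻¹)
      (by norm_num : (2⁻¹:ℝ) < 1)).const_mul ((2:ℝ)^(1-2*n+m))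
  simpa using (tendsto_const_nhds.sub h0)
end

section
/- Two minimal words of a configuration are either disjoint or nested: if x[n,m] and x[n',m'] are minimal words of x ∈ {0,1}^ℤ with m < m', then either m < n' or n' < n. -/
/-!
If `n ≤ n' ≤ m < m'`, split `x[n', m']` at `m`: the left part `x[n', m]` is a suffix of the
minimal word `x[n, m]`, so at least half of it is ones, and the right part `x[m + 1, m']` is a
proper suffix of `x[n', m']`, so more than half of it is ones. Then more than half of `x[n', m']`
is ones, contradicting its minimality.
-/

/-- x[n,m] is a minimal word: exactly half its entries are ones, it ends
with a one, and every proper suffix segment has strictly more ones than zeros. -/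
def IsMinimalWord (x : ℤ → ℕ) (n m : ℤ) : Prop :=
  n ≤ m ∧ x m = 1 ∧
  2 * (∑ i ∈ Finset.Icc n m, (x i : ℤ)) = m - n + 1 ∧
  ∀ k : ℤ, n < k → k ≤ m → 2 * (∑ i ∈ Finset.Icc k m, (x i : ℤ)) > m - k + 1

open Finset

theorem Finset.sum_Icc_add_sum_Icc_add_one {M : Type*} [AddCommMonoid M] (f : ℤ → M)
    {a b c : ℤ} (hab : a ≤ b + 1) (hbc : b ≤ c) :
    ∑ i ∈ Icc a b, f i + ∑ i ∈ Icc (b + 1) c, f i = ∑ i ∈ Icc a c, f i := by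
  rw [← sum_union (disjoint_left.2 fun i hi hi' => by simp only [mem_Icc] at hi hi'; omega)]
  congr 1
  ext i
  simp only [mem_union, mem_Icc]
  omega

namespace IsMinimalWord

variable {x : ℤ → ℕ} {n m k : ℤ}

theorem lt_two_mul_sum_suffix (hw : IsMinimalWord x n m) (hnk : n < k) (hkm : k ≤ m) :
    m - k + 1 < 2 * ∑ i ∈ Icc k m, (x i : ℤ) :=
  hw.2.2.2 k hnk hkm

theorem le_two_mul_sum_suffix (hw : IsMinimalWord x n m) (hnk : n ≤ k) (hkm : k ≤ m) :
    m - k + 1 ≤ 2 * ∑ i ∈ Icc k m, (x i : ℤ) := by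
  rcases hnk.eq_or_lt with rfl | hlt
  · exact hw.2.2.1.ge
  · exact (hw.lt_two_mul_sum_suffix hlt hkm).le

end IsMinimalWord

theorem minimal_words_disjoint_or_nested_general (x : ℤ → ℕ)
    (n m n' m' : ℤ) (h1 : IsMinimalWord x n m) (h2 : IsMinimalWord x n' m')
    (h : m < m') :
    m < n' ∨ n' < n := by
  by_contra! hc
  obtain ⟨hn'm, hnn'⟩ := hc
  have hleft := h1.le_two_mul_sum_suffix hnn' hn'm
  have hright := h2.lt_two_mul_sum_suffix (k := m + 1) (by omega) h
  have hsplit := sum_Icc_add_sum_Icc_add_one (fun i => (x i : ℤ)) (by omega : n' ≤ m + 1) h.le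
  linarith [h2.2.2.1]

/-- Two minimal words are either disjoint or nested: if x[n,m] and x[n',m']
are minimal words with m < m', then either m < n' or n' < n. -/
theorem minimal_words_disjoint_or_nested (x : ℤ → ℕ) (hx : ∀ i, x i ≤ 1)
    (n m n' m' : ℤ) (h1 : IsMinimalWord x n m) (h2 : IsMinimalWord x n' m')
    (h : m < m') :
    m < n' ∨ n' < n :=
  minimal_words_disjoint_or_nested_general x n m n' m' h1 h2 h
end

section
/- Low-density convergence to the free set: if x ∈ {0,1}^ℤ satisfies ρ₊(x,1) ≤ 1/2 and additionally there exist n,m ∈ ℤ₊ such that every window x[i, i+m-1] with i ≥ n has at most half its entries equal to one, then dist(T^t x, Free) ≤ C·2^{-t} for some constant C and all t ≥ 0. -/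
open Filter

/-- The set Free of binary configurations with no two consecutive ones. -/
def FreeSet : Set (ℤ → ℕ) := {y | (∀ i, y i ≤ 1) ∧ ∀ i : ℤ, y i * y (i + 1) = 0}

/-- Distance from x to the set Free. -/
noncomputable def distToFree (x : ℤ → ℕ) : ℝ :=
  sInf ((fun y => cdist x y) '' FreeSet)

/-!
Encode a binary configuration `y` by a height function `h` with `h j - h (j - 1) = 1 - 2 y j`.
One step of `T` acts on heights as `h ↦ fun i => min (h (i - 1)) (h (i + 1))`, so after `t` steps
the height at `c` is the minimum of the initial height over the sites `c - t, c - t + 2, …, c + t`.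
Two adjacent ones at sites `i, i + 1` at time `t` make this minimum at `i + 1` smaller than at
`i - 1`, so it is attained at the right edge `i + 1 + t`, and the initial height must drop across
the `2 m` sites before that edge; the window hypothesis forbids this once `i ≥ n + 2 m - 2 - t`.
Cutting `T^[t] x` off to the left of that point gives a free configuration at distance
`O(2 ^ (-t))`.
-/

open Finset

section Antiderivative

variable {G : Type*} [AddCommGroup G]

lemma sum_Ioc_add_sum_Ioc {α : Type*} [LinearOrder α] [LocallyFiniteOrder α] (f : α → G)
    {a b c : α} (hab : a ≤ b) (hbc : b ≤ c) :
    ∑ k ∈ Ioc a b, f k + ∑ k ∈ Ioc b c, f k = ∑ k ∈ Ioc a c, f k := by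
  rw [← sum_union (Ioc_disjoint_Ioc_of_le le_rfl), Ioc_union_Ioc_eq_Ioc hab hbc]

lemma Int.sum_Ioc_sub_one_self (g : ℤ → G) (j : ℤ) : ∑ k ∈ Ioc (j - 1) j, g k = g j := by
  rw [Ioc_sub_one_left_eq_Icc, Icc_self, sum_singleton]

lemma sub_eq_sum_Ioc_of_forall_sub_pred {g h : ℤ → G} (hh : ∀ j, h j - h (j - 1) = g j)
    {a b : ℤ} (hab : a ≤ b) : h b - h a = ∑ k ∈ Ioc a b, g k := by
  induction b, hab using Int.leInduction with
  | base => simp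
  | succ b hab ih =>
    have hstep := Int.sum_Ioc_sub_one_self g (b + 1)
    rw [add_sub_cancel_right] at hstep
    rw [← sum_Ioc_add_sum_Ioc g hab (Int.le_add_one le_rfl), ← ih, hstep, ← hh (b + 1),
      add_sub_cancel_right]
    abel

lemma exists_forall_sub_pred_eq (g : ℤ → G) : ∃ h : ℤ → G, ∀ j, h j - h (j - 1) = g j := by
  refine ⟨fun j => ∑ k ∈ Ioc 0 j, g k - ∑ k ∈ Ioc j 0, g k, fun j => ?_⟩
  dsimp only
  rcases lt_or_ge 0 j with hj | hj
  · rw [← sum_Ioc_add_sum_Ioc g (by omega : (0 : ℤ) ≤ j - 1) (by omega : j - 1 ≤ j),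
      Int.sum_Ioc_sub_one_self, Ioc_eq_empty_of_le hj.le,
      Ioc_eq_empty_of_le (by omega : (0 : ℤ) ≤ j - 1)]
    abel
  · rw [← sum_Ioc_add_sum_Ioc g (by omega : j - 1 ≤ j) hj, Int.sum_Ioc_sub_one_self,
      Ioc_eq_empty_of_le hj, Ioc_eq_empty_of_le (by omega : j - 1 ≤ 0)]
    abel

end Antiderivative

lemma T_le_one {y : ℤ → ℕ} (hy : ∀ i, y i ≤ 1) (i : ℤ) : T y i ≤ 1 := by
  have := hy (i - 1); have := hy i; have := hy (i + 1)
  simp only [T]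
  omega

lemma iterate_T_le_one {x : ℤ → ℕ} (hx : ∀ i, x i ≤ 1) (t : ℕ) (i : ℤ) : T^[t] x i ≤ 1 := by
  induction t generalizing i with
  | zero => exact hx i
  | succ t ih => rw [Function.iterate_succ_apply']; exact T_le_one ih i

def IsHeight (h : ℤ → ℤ) (y : ℤ → ℕ) : Prop := ∀ j, h j - h (j - 1) = 1 - 2 * (y j : ℤ)

lemma exists_isHeight (y : ℤ → ℕ) : ∃ h, IsHeight h y :=
  exists_forall_sub_pred_eq _

lemma IsHeight.min_neighbours {h : ℤ → ℤ} {y : ℤ → ℕ} (hy : ∀ i, y i ≤ 1) (hh : IsHeight h y) :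
    IsHeight (fun i => min (h (i - 1)) (h (i + 1))) (T y) := by
  intro i
  have h₁ := hh (i - 1); have h₂ := hh i; have h₃ := hh (i + 1)
  have := hy (i - 1); have := hy i; have := hy (i + 1)
  simp only [T, sub_add_cancel, add_sub_cancel_right, sub_sub, one_add_one_eq_two] at h₁ h₃ ⊢
  omega

lemma IsHeight.le_add_of_window {h : ℤ → ℤ} {x : ℤ → ℕ} (hh : IsHeight h x) {n m : ℕ}
    (hwin : ∀ i : ℤ, (n : ℤ) ≤ i → 2 * (∑ j ∈ Icc i (i + (m : ℤ) - 1), (x j : ℤ)) ≤ m)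
    {a : ℤ} (ha : (n : ℤ) ≤ a + 1) : h a ≤ h (a + m) := by
  have hsum := sub_eq_sum_Ioc_of_forall_sub_pred hh (by omega : a ≤ a + m)
  have hIoc : Ioc a (a + m) = Icc (a + 1) (a + 1 + m - 1) := by
    rw [← Ioc_sub_one_left_eq_Icc]; congr 1 <;> ring
  rw [hIoc, sum_sub_distrib, sum_const, Int.card_Icc, ← mul_sum] at hsum
  have := hwin (a + 1) ha
  simp only [show a + 1 + m - 1 + 1 - (a + 1) = m by ring, Int.toNat_natCast, Int.nsmul_eq_mul,
    mul_one] at hsum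
  omega

noncomputable def cone (c : ℤ) (t : ℕ) : Finset ℤ :=
  {j ∈ Icc (c - t) (c + t) | (c + t - j) % 2 = 0}

lemma mem_cone {c j : ℤ} {t : ℕ} :
    j ∈ cone c t ↔ c - t ≤ j ∧ j ≤ c + t ∧ (c + t - j) % 2 = 0 := by
  simp only [cone, mem_filter, mem_Icc, and_assoc]

lemma cone_nonempty (c : ℤ) (t : ℕ) : (cone c t).Nonempty :=
  ⟨c + t, mem_cone.2 (by omega)⟩

lemma cone_zero (c : ℤ) : cone c 0 = {c} := by
  ext j; simp only [mem_cone, mem_singleton]; omega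

lemma cone_succ (c : ℤ) (t : ℕ) : cone c (t + 1) = cone (c - 1) t ∪ cone (c + 1) t := by
  ext j; simp only [mem_union, mem_cone]; push_cast; omega

noncomputable def coneMin (h : ℤ → ℤ) (t : ℕ) (c : ℤ) : ℤ := (cone c t).inf' (cone_nonempty c t) h

lemma coneMin_le {h : ℤ → ℤ} {t : ℕ} {c j : ℤ} (hj : j ∈ cone c t) : coneMin h t c ≤ h j :=
  inf'_le h hj

lemma coneMin_zero (h : ℤ → ℤ) : coneMin h 0 = h := by
  funext c; simp [coneMin, cone_zero]

lemma coneMin_succ (h : ℤ → ℤ) (t : ℕ) :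
    coneMin h (t + 1) = fun c => min (coneMin h t (c - 1)) (coneMin h t (c + 1)) := by
  funext c
  simp only [coneMin]
  rw [← inf'_union]
  congr 1
  exact cone_succ c t

lemma IsHeight.coneMin {h : ℤ → ℤ} {x : ℤ → ℕ} (hx : ∀ i, x i ≤ 1) (hh : IsHeight h x) (t : ℕ) :
    IsHeight (coneMin h t) (T^[t] x) := by
  induction t with
  | zero => rwa [coneMin_zero]
  | succ t ih =>
    rw [coneMin_succ, Function.iterate_succ_apply']
    exact ih.min_neighbours (iterate_T_le_one hx t)

lemma coneMin_eq_of_lt {h : ℤ → ℤ} {t : ℕ} {c : ℤ} (hlt : coneMin h t (c + 2) < coneMin h t c) :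
    coneMin h t (c + 2) = h (c + 2 + t) := by
  -- `c + 2 + t` is the only site of `cone (c + 2) t` outside `cone c t`.
  obtain ⟨j, hj, hmin⟩ := exists_mem_eq_inf' (cone_nonempty (c + 2) t) h
  rw [← coneMin] at hmin
  suffices j = c + 2 + t by rw [hmin, this]
  by_contra hne
  have : j ∈ cone c t := by rw [mem_cone] at hj ⊢; omega
  have := coneMin_le (h := h) this
  omega

lemma iterate_T_mul_succ_eq_zero {x : ℤ → ℕ} (hx : ∀ i, x i ≤ 1) {n m : ℕ} (hm : 0 < m)
    (hwin : ∀ i : ℤ, (n : ℤ) ≤ i → 2 * (∑ j ∈ Icc i (i + (m : ℤ) - 1), (x j : ℤ)) ≤ m)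
    {t : ℕ} (ht : m ≤ t) {i : ℤ} (hi : (n : ℤ) + 2 * m - 2 - t ≤ i) :
    T^[t] x i * T^[t] x (i + 1) = 0 := by
  obtain ⟨h, hh⟩ := exists_isHeight x
  have hM := hh.coneMin hx t
  by_contra hjam
  have := iterate_T_le_one hx t i; have := iterate_T_le_one hx t (i + 1)
  have hdrop : coneMin h t (i - 1 + 2) < coneMin h t (i - 1) := by
    have h₁ := hM i; have h₂ := hM (i + 1)
    rw [add_sub_cancel_right] at h₂
    rw [show i - 1 + 2 = i + 1 by ring]
    simp only [mul_eq_zero, not_or] at hjam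
    omega
  have hedge := coneMin_eq_of_lt hdrop
  have hfar : coneMin h t (i - 1) ≤ h (i + 1 + t - 2 * m) := coneMin_le (mem_cone.2 (by omega))
  have hwin₁ := hh.le_add_of_window hwin (a := i + 1 + t - 2 * m) (by omega)
  have hwin₂ := hh.le_add_of_window hwin (a := i + 1 + t - m) (by omega)
  rw [show i - 1 + 2 + t = i + 1 + t - m + m by ring] at hedge
  rw [show i + 1 + t - 2 * m + m = i + 1 + t - m by ring] at hwin₁
  omega

lemma distToFree_le_cdist {u y : ℤ → ℕ} (hy : y ∈ FreeSet) : distToFree u ≤ cdist u y :=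
  csInf_le ⟨0, by rintro _ ⟨v, -, rfl⟩; exact tsum_nonneg fun i => by positivity⟩ ⟨y, hy, rfl⟩

lemma zero_mem_freeSet : (0 : ℤ → ℕ) ∈ FreeSet := ⟨fun _ => zero_le_one, fun _ => rfl⟩

lemma indicator_Ici_mem_freeSet {u : ℤ → ℕ} (hu : ∀ i, u i ≤ 1) {a : ℤ}
    (hjam : ∀ i, a ≤ i → u i * u (i + 1) = 0) : (Set.Ici a).indicator u ∈ FreeSet := by
  refine ⟨fun i => ?_, fun i => ?_⟩
  · by_cases hi : a ≤ i
    · simpa [Set.indicator_of_mem, hi] using hu i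
    · simp [Set.indicator_of_notMem, hi]
  · by_cases hi : a ≤ i
    · simpa [Set.indicator_of_mem, hi, show a ≤ i + 1 by omega] using hjam i hi
    · simp [Set.indicator_of_notMem, hi]

lemma summable_two_zpow_neg_abs : Summable fun i : ℤ => (2 : ℝ) ^ (-|i|) := by
  apply Summable.of_nat_of_neg <;>
  · refine summable_geometric_two.congr fun k => ?_
    simp

lemma abs_natCast_sub_natCast_le_one {p q : ℕ} (hp : p ≤ 1) (hq : q ≤ 1) :
    |(p : ℝ) - q| ≤ 1 := by
  interval_cases p <;> interval_cases q <;> norm_num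

lemma cdist_le_tsum {u v : ℤ → ℕ} (hu : ∀ i, u i ≤ 1) (hv : ∀ i, v i ≤ 1) {w : ℤ → ℝ}
    (hw : Summable w) (hw₀ : ∀ i, 0 ≤ w i) (huvw : ∀ i, u i ≠ v i → (2 : ℝ) ^ (-|i|) ≤ w i) :
    cdist u v ≤ ∑' i, w i := by
  have hterm : ∀ i, (2 : ℝ) ^ (-|i|) * |(u i : ℝ) - v i| ≤ w i := fun i => by
    by_cases huv : u i = v i
    · simpa [huv] using hw₀ i
    · calc (2 : ℝ) ^ (-|i|) * |(u i : ℝ) - v i| ≤ (2 : ℝ) ^ (-|i|) * 1 := by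
            gcongr; exact abs_natCast_sub_natCast_le_one (hu i) (hv i)
        _ ≤ w i := by rw [mul_one]; exact huvw i huv
  exact (hw.of_nonneg_of_le (fun i => by positivity) hterm).tsum_le_tsum hterm hw

lemma cdist_le_tsum_two_zpow {u v : ℤ → ℕ} (hu : ∀ i, u i ≤ 1) (hv : ∀ i, v i ≤ 1) :
    cdist u v ≤ ∑' i : ℤ, (2 : ℝ) ^ (-|i|) :=
  cdist_le_tsum hu hv summable_two_zpow_neg_abs (fun i => by positivity) fun _ _ => le_rfl

lemma cdist_le_of_eqOn_Ici {u v : ℤ → ℕ} (hu : ∀ i, u i ≤ 1) (hv : ∀ i, v i ≤ 1) {a : ℤ}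
    (huv : ∀ i, a ≤ i → u i = v i) : cdist u v ≤ 2 ^ a * ∑' i : ℤ, (2 : ℝ) ^ (-|i|) := by
  have hshift : ∑' i : ℤ, (2 : ℝ) ^ (-|i - a|) = ∑' i : ℤ, (2 : ℝ) ^ (-|i|) :=
    (Equiv.subRight a).tsum_eq fun i => (2 : ℝ) ^ (-|i|)
  rw [← hshift, ← tsum_mul_left]
  have hsum := (Equiv.subRight a).summable_iff.2 summable_two_zpow_neg_abs
  refine cdist_le_tsum hu hv (hsum.mul_left _) (fun i => by positivity) fun i huvi => ?_
  have hi : i < a := lt_of_not_ge fun h => huvi (huv i h)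
  rw [← zpow_add₀ two_ne_zero, abs_of_neg (sub_neg.2 hi)]
  exact zpow_le_zpow_right₀ one_le_two (by linarith [neg_abs_le i])

theorem exp_convergence_to_free_general (x : ℤ → ℕ) (hx : ∀ i, x i ≤ 1)
    (n m : ℕ) (hm : 0 < m)
    (hwin : ∀ i : ℤ, (n : ℤ) ≤ i →
      2 * (∑ j ∈ Finset.Icc i (i + (m : ℤ) - 1), (x j : ℤ)) ≤ m) :
    ∃ C : ℝ, ∀ t : ℕ, distToFree (T^[t] x) ≤ C * (2 : ℝ) ^ (-(t : ℤ)) := by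
  set B := ∑' i : ℤ, (2 : ℝ) ^ (-|i|)
  refine ⟨2 ^ ((n : ℤ) + 2 * m) * B, fun t => ?_⟩
  suffices ∃ k : ℤ, k ≤ n + 2 * m - t ∧ distToFree (T^[t] x) ≤ 2 ^ k * B by
    obtain ⟨k, hk, hdist⟩ := this
    calc distToFree (T^[t] x) ≤ 2 ^ k * B := hdist
      _ ≤ 2 ^ ((n : ℤ) + 2 * m - t) * B := by
        have : 0 ≤ B := tsum_nonneg fun i => by positivity
        gcongr
        exact one_le_two
      _ = _ := by rw [mul_right_comm, ← zpow_add₀ two_ne_zero, sub_eq_add_neg]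
  have hxt := iterate_T_le_one hx t
  rcases lt_or_ge t m with ht | ht
  · refine ⟨0, by omega, ?_⟩
    calc distToFree (T^[t] x) ≤ cdist (T^[t] x) 0 := distToFree_le_cdist zero_mem_freeSet
      _ ≤ 2 ^ (0 : ℤ) * B := by
        rw [zpow_zero, one_mul]; exact cdist_le_tsum_two_zpow hxt fun _ => zero_le_one
  · set a : ℤ := n + 2 * m - 2 - t
    refine ⟨a, by omega, ?_⟩
    have hfree := indicator_Ici_mem_freeSet hxt fun i hi =>
      iterate_T_mul_succ_eq_zero hx hm hwin ht hi
    calc distToFree (T^[t] x) ≤ cdist (T^[t] x) ((Set.Ici a).indicator (T^[t] x)) :=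
          distToFree_le_cdist hfree
      _ ≤ 2 ^ a * B := cdist_le_of_eqOn_Ici hxt hfree.1 fun i hi =>
          (Set.indicator_of_mem (Set.mem_Ici.2 hi) _).symm

/-- If ρ₊(x,1) ≤ 1/2 and moreover there are n, m such that every length-m
window x[i, i+m-1] with i ≥ n has at most half its entries equal to one,
then dist(Tᵗx, Free) ≤ C·2^{-t} for some constant C. -/
theorem exp_convergence_to_free (x : ℤ → ℕ) (hx : ∀ i, x i ≤ 1)
    (hρ : rhoPlus x ≤ 1 / 2) (n m : ℕ) (hm : 0 < m)
    (hwin : ∀ i : ℤ, (n : ℤ) ≤ i →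
      2 * (∑ j ∈ Finset.Icc i (i + (m : ℤ) - 1), (x j : ℤ)) ≤ m) :
    ∃ C : ℝ, ∀ t : ℕ, distToFree (T^[t] x) ≤ C * (2 : ℝ) ^ (-(t : ℤ)) :=
  exp_convergence_to_free_general x hx n m hm hwin
end
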